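/- Let ℜ₂₀(0) be the algebra on ℂ⁴ with bracket [e₁,e₂] = e₄, [e₂,e₁] = e₄, [e₂,e₂] = e₃. Then this bracket satisfies both the left and the right Leibniz identity (so ℜ₂₀(0) is a symmetric, nilpotent, non-Lie Leibniz algebra), and the bilinear form B on ℂ⁴ defined by B(e₁,e₃) = B(e₃,e₁) = 1, B(e₂,e₄) = B(e₄,e₂) = 1, all other basis values 0, is symmetric, nondegenerate and invariant for this bracket. In particular ℜ₂₀(0) is a metric Leibniz algebra. -/
import Mathlib


/-- The bracket of the algebra `ℜ₂₀(0)` on `ℂ⁴`: `[e₁,e₂] = e₄`,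
`[e₂,e₁] = e₄`, `[e₂,e₂] = e₃`, all other basis brackets zero, in coordinates. -/
def R20Bracket (x y : Fin 4 → ℂ) : Fin 4 → ℂ :=
  ![0, 0, x 1 * y 1, x 0 * y 1 + x 1 * y 0]

/-- The bilinear form `B` on `ℂ⁴` with `B(e₁,e₃) = B(e₃,e₁) = 1`,
`B(e₂,e₄) = B(e₄,e₂) = 1`, all other basis values `0`, in coordinates. -/
def R20Form (x y : Fin 4 → ℂ) : ℂ := x 0 * y 2 + x 2 * y 0 + x 1 * y 3 + x 3 * y 1

/-- The bracket of `ℜ₂₀(0)` satisfies both Leibniz identities (so `ℜ₂₀(0)`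
is a symmetric, nilpotent, non-Lie Leibniz algebra), and `B` is a symmetric,
nondegenerate, invariant bilinear form for it.  In particular `ℜ₂₀(0)` is a
metric Leibniz algebra. -/
theorem R20_is_metric :
    (∀ x y z : Fin 4 → ℂ,
      R20Bracket x (R20Bracket y z) =
        R20Bracket (R20Bracket x y) z + R20Bracket y (R20Bracket x z)) ∧
    (∀ x y z : Fin 4 → ℂ,
      R20Bracket x (R20Bracket y z) =
        R20Bracket (R20Bracket x y) z - R20Bracket (R20Bracket x z) y) ∧
    (∀ x y z : Fin 4 → ℂ, R20Bracket (R20Bracket x y) z = 0) ∧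
    R20Bracket ![0, 1, 0, 0] ![0, 1, 0, 0] ≠ 0 ∧
    (∀ x y : Fin 4 → ℂ, R20Form x y = R20Form y x) ∧
    (∀ v : Fin 4 → ℂ, (∀ w : Fin 4 → ℂ, R20Form v w = 0) → v = 0) ∧
    (∀ x y z : Fin 4 → ℂ, R20Form (R20Bracket x y) z = R20Form x (R20Bracket y z)) := by
  refine ⟨?_, ?_, ?_, ?_, ?_, ?_, ?_⟩
  · intro x y z
    funext i
    fin_cases i <;> simp [R20Bracket]
  · intro x y z
    funext i
    fin_cases i <;> simp [R20Bracket]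
  · intro x y z
    funext i
    fin_cases i <;> simp [R20Bracket]
  · intro h
    have := congrFun h 2
    simp [R20Bracket] at this
  · intro x y
    simp [R20Form]; ring
  · intro v h
    funext i
    have h0 := h ![0, 0, 1, 0]
    have h1 := h ![0, 0, 0, 1]
    have h2 := h ![1, 0, 0, 0]
    have h3 := h ![0, 1, 0, 0]
    simp [R20Form] at h0 h1 h2 h3
    fin_cases i <;> simpa using ‹_›
  · intro x y z
    simp [R20Form, R20Bracket]; ring
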